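/- arXiv:1602.08382 — 8 statements merged into one kernel-verified Lean document; each statement's English description precedes it below -/
import Mathlib

section
/- Let (S_n)_{n≥1} be a strictly increasing sequence of positive reals with S_n → ∞ such that ∑ S_n^{-1/α} < ∞ for all α ∈ (0,1). Define P_n(α) = S_n^{-1/α} / ∑_{i=1}^∞ S_i^{-1/α}. Then for each fixed n, P_n(α)^α → S_1/S_n as α → 0⁺. -/
open Filter Topology Real

/-- `S` (indexed from 0, representing `S_1 < S_2 < ⋯`) strictly increasing positive, tending
to infinity, with `∑ S_i^(-1/α) < ∞` for all `α ∈ (0,1)`.  Then for each fixed `n`,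
`P_n(α)^α → S_1 / S_n` as `α → 0⁺`, where `P_n(α) = S_n^(-1/α) / ∑_i S_i^(-1/α)`. -/
theorem stmt_1
    (S : ℕ → ℝ) (hpos : 0 < S 0) (hmono : StrictMono S)
    (hinf : Tendsto S atTop atTop)
    (hsum : ∀ α ∈ Set.Ioo (0 : ℝ) 1, Summable (fun i : ℕ => S i ^ (-(1 / α))))
    (P : ℕ → ℝ → ℝ)
    (hP : ∀ n α, P n α = S n ^ (-(1 / α)) / ∑' i : ℕ, S i ^ (-(1 / α)))
    (n : ℕ) :
    Tendsto (fun α : ℝ => P n α ^ α) (𝓝[>] 0) (𝓝 (S 0 / S n)) := by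
  have hS : ∀ i, 0 < S i := fun i => lt_of_lt_of_le hpos (hmono.monotone (Nat.zero_le i))
  set r1 : ℝ := S 1 / S 0 with hr1def
  have hr1 : 1 < r1 := (one_lt_div hpos).2 (hmono Nat.zero_lt_one)
  have hr1pos : 0 < r1 := by positivity
  -- summability at exponent -2
  have hsum2 : Summable (fun i : ℕ => S i ^ (-2 : ℝ)) := by
    have h := hsum (1/2) (by norm_num)
    simpa using h
  have hsumρ : Summable (fun i : ℕ => (S (i+1) / S 0) ^ (-2 : ℝ)) := by
    have h1 : Summable (fun i : ℕ => S (i+1) ^ (-2 : ℝ)) :=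
      hsum2.comp_injective (add_left_injective 1)
    refine (h1.mul_right (S 0 ^ (-2:ℝ))⁻¹).congr fun i => ?_
    rw [div_rpow (hS _).le hpos.le, div_eq_mul_inv]
  set C : ℝ := ∑' i : ℕ, (S (i+1) / S 0) ^ (-2 : ℝ) with hC
  have hC0 : 0 ≤ C := tsum_nonneg fun i => rpow_nonneg (div_nonneg (hS _).le hpos.le) _
  set T : ℝ → ℝ := fun α => ∑' i : ℕ, S i ^ (-(1/α)) with hT
  set ε : ℝ → ℝ := fun α => C * r1 ^ (2 - 1/α) with hε
  have hε0 : ∀ α, 0 ≤ ε α := fun α => mul_nonneg hC0 (rpow_nonneg hr1pos.le _)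
  -- key bounds for α ∈ (0, 1/2)
  have key : ∀ α ∈ Set.Ioo (0:ℝ) (1/2),
      S 0 ^ (-(1/α)) ≤ T α ∧ T α ≤ S 0 ^ (-(1/α)) * (1 + ε α) := by
    rintro α ⟨hα0, hα2⟩
    have hα1 : α < 1 := by linarith
    have hsα : Summable (fun i : ℕ => S i ^ (-(1/α))) := hsum α ⟨hα0, hα1⟩
    have hexp : (2:ℝ) - 1/α ≤ 0 := by
      have : (2:ℝ) ≤ 1/α := by rw [le_div_iff₀ hα0]; linarith
      linarith
    refine ⟨Summable.le_tsum hsα 0 fun i _ => rpow_nonneg (hS i).le _, ?_⟩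
    have hsplit : T α = S 0 ^ (-(1/α)) + ∑' i : ℕ, S (i+1) ^ (-(1/α)) := by
      exact Summable.tsum_eq_zero_add hsα
    have hterm : ∀ i : ℕ, S (i+1) ^ (-(1/α)) ≤
        S 0 ^ (-(1/α)) * ((S (i+1)/S 0) ^ (-2:ℝ) * r1 ^ (2 - 1/α)) := by
      intro i
      set ρ : ℝ := S (i+1) / S 0 with hρ
      have hρpos : 0 < ρ := div_pos (hS _) hpos
      have hρr1 : r1 ≤ ρ := by
        rw [hρ, hr1def]
        gcongr
        exact hmono.monotone (by omega)
      have h1 : S (i+1) ^ (-(1/α)) = S 0 ^ (-(1/α)) * ρ ^ (-(1/α)) := by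
        rw [← mul_rpow hpos.le hρpos.le, mul_div_cancel₀ _ hpos.ne']
      have h2 : ρ ^ (-(1/α)) = ρ ^ (-2:ℝ) * ρ ^ (2 - 1/α) := by
        rw [← rpow_add hρpos]; ring_nf
      have h3 : ρ ^ (2 - 1/α) ≤ r1 ^ (2 - 1/α) :=
        rpow_le_rpow_of_nonpos hr1pos hρr1 hexp
      rw [h1, h2]
      have hbse : 0 ≤ S 0 ^ (-(1/α)) := rpow_nonneg hpos.le _
      have hρ2 : 0 ≤ ρ ^ (-2:ℝ) := rpow_nonneg hρpos.le _
      exact mul_le_mul_of_nonneg_left (mul_le_mul_of_nonneg_left h3 hρ2) hbse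
    have hsumrhs : Summable (fun i : ℕ =>
        S 0 ^ (-(1/α)) * ((S (i+1)/S 0) ^ (-2:ℝ) * r1 ^ (2 - 1/α))) :=
      ((hsumρ.mul_right _).mul_left _)
    have hsumlhs : Summable (fun i : ℕ => S (i+1) ^ (-(1/α))) :=
      hsα.comp_injective (add_left_injective 1)
    have htail : (∑' i : ℕ, S (i+1) ^ (-(1/α))) ≤ S 0 ^ (-(1/α)) * ε α := by
      calc (∑' i : ℕ, S (i+1) ^ (-(1/α)))
          ≤ ∑' i : ℕ, S 0 ^ (-(1/α)) * ((S (i+1)/S 0) ^ (-2:ℝ) * r1 ^ (2 - 1/α)) :=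
            Summable.tsum_le_tsum hterm hsumlhs hsumrhs
        _ = S 0 ^ (-(1/α)) * (C * r1 ^ (2 - 1/α)) := by
            rw [tsum_mul_left, tsum_mul_right]
        _ = S 0 ^ (-(1/α)) * ε α := rfl
    rw [hsplit]; linarith
  -- bounds for T α ^ α
  have keypow : ∀ α ∈ Set.Ioo (0:ℝ) (1/2),
      (S 0)⁻¹ ≤ T α ^ α ∧ T α ^ α ≤ (S 0)⁻¹ * (1 + ε α) := by
    rintro α ⟨hα0, hα2⟩
    obtain ⟨hlo, hhi⟩ := key α ⟨hα0, hα2⟩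
    have hbase : (S 0 ^ (-(1/α))) ^ α = (S 0)⁻¹ := by
      rw [← rpow_mul hpos.le, show -(1/α)*α = (-1:ℝ) by field_simp, rpow_neg_one]
    have hTnn : (0:ℝ) ≤ T α := le_trans (rpow_nonneg hpos.le _) hlo
    constructor
    · calc (S 0)⁻¹ = (S 0 ^ (-(1/α))) ^ α := hbase.symm
        _ ≤ T α ^ α := rpow_le_rpow (rpow_nonneg hpos.le _) hlo hα0.le
    · calc T α ^ α ≤ (S 0 ^ (-(1/α)) * (1 + ε α)) ^ α :=
            rpow_le_rpow hTnn hhi hα0.le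
        _ = (S 0 ^ (-(1/α))) ^ α * (1 + ε α) ^ α := by
            rw [mul_rpow (rpow_nonneg hpos.le _) (by linarith [hε0 α])]
        _ ≤ (S 0)⁻¹ * (1 + ε α) := by
            rw [hbase]
            have h1 : (1 + ε α) ^ α ≤ (1 + ε α) ^ (1:ℝ) :=
              rpow_le_rpow_of_exponent_le (by linarith [hε0 α]) (by linarith)
            rw [rpow_one] at h1
            exact mul_le_mul_of_nonneg_left h1 (by positivity)
  -- the window (0, 1/2) is eventually reached
  have hmem : Set.Ioo (0:ℝ) (1/2) ∈ 𝓝[>] (0:ℝ) :=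
    Ioo_mem_nhdsGT_of_mem ⟨le_refl 0, by norm_num⟩
  -- ε tends to 0
  have hεtend : Tendsto ε (𝓝[>] (0:ℝ)) (𝓝 0) := by
    have hbot : Tendsto (fun α : ℝ => 2 - 1/α) (𝓝[>] (0:ℝ)) atBot := by
      have h0 : Tendsto (fun α : ℝ => (1/α)) (𝓝[>] (0:ℝ)) atTop := by
        simpa [one_div] using tendsto_inv_nhdsGT_zero
      have h1 : Tendsto (fun α : ℝ => -(1/α)) (𝓝[>] (0:ℝ)) atBot :=
        tendsto_neg_atBot_iff.mpr h0
      have := tendsto_atBot_add_const_left (𝓝[>] (0:ℝ)) 2 h1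
      simpa [sub_eq_add_neg] using this
    have h2 : Tendsto (fun α : ℝ => r1 ^ (2 - 1/α)) (𝓝[>] (0:ℝ)) (𝓝 0) :=
      (tendsto_rpow_atBot_of_base_gt_one r1 hr1).comp hbot
    have h3 := h2.const_mul C
    rw [mul_zero] at h3
    exact h3
  -- T α ^ α → (S 0)⁻¹ by squeeze
  have hTtend : Tendsto (fun α => T α ^ α) (𝓝[>] (0:ℝ)) (𝓝 (S 0)⁻¹) := by
    have hupper : Tendsto (fun α => (S 0)⁻¹ * (1 + ε α)) (𝓝[>] (0:ℝ)) (𝓝 (S 0)⁻¹) := by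
      have := ((tendsto_const_nhds (x := (1:ℝ))).add hεtend).const_mul (S 0)⁻¹
      simpa using this
    refine tendsto_of_tendsto_of_tendsto_of_le_of_le' tendsto_const_nhds hupper ?_ ?_
    · filter_upwards [hmem] with α hα using (keypow α hα).1
    · filter_upwards [hmem] with α hα using (keypow α hα).2
  -- conclude
  have hfinal : Tendsto (fun α => (S n)⁻¹ / T α ^ α) (𝓝[>] (0:ℝ)) (𝓝 (S 0 / S n)) := by
    have := (tendsto_const_nhds (x := (S n)⁻¹)).div hTtend (inv_ne_zero hpos.ne')
    have heq : (S n)⁻¹ / (S 0)⁻¹ = S 0 / S n := by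
      field_simp
    rwa [heq] at this
  refine hfinal.congr' ?_
  filter_upwards [hmem] with α hα
  obtain ⟨hα0, hα2⟩ := hα
  have hTpos : 0 < T α := lt_of_lt_of_le (rpow_pos_of_pos hpos _) (key α ⟨hα0, hα2⟩).1
  rw [hP, hT]
  rw [div_rpow (rpow_nonneg (hS n).le _) (le_of_lt hTpos)]
  congr 1
  rw [← rpow_mul (hS n).le, show -(1/α)*α = (-1:ℝ) by field_simp, rpow_neg_one]
end

section
/- Let (S_n)_{n≥1} be a strictly increasing sequence of positive reals with ∑ S_n^{-1/α} < ∞ for all α ∈ (0,1), and let γ : (0,1) → (0,1] satisfy γ(α)/α → c ∈ [0,∞) as α → 0⁺. Then for each n ≥ 2, P_n(α)^{γ(α)} → (S_1/S_n)^c as α → 0⁺, where P_n(α) = S_n^{-1/α} / ∑_{i=1}^∞ S_i^{-1/α}. -/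
open Filter Topology

/-!
Normalising by `S₁`, `P_n(α) = b^{1/α} / Q(α)` with `b = S₁/S_n` and
`Q(α) = ∑ (S₁/S_i)^{1/α}`. Every term of `Q` except the first (which is `1`) tends to `0` as
`α → 0⁺`, dominated by its value at `α = 1/2`, so `Q(α) → 1` by dominated convergence.
Since `γ(α) = (γ(α)/α)·α → 0`, `Q(α)^{γ(α)} → 1`, while `b^{γ(α)/α} → b^c`.
-/

lemma Real.div_rpow_eq_rpow_mul_rpow_neg {a s : ℝ} (ha : 0 ≤ a) (hs : 0 ≤ s) (t : ℝ) :
    (a / s) ^ t = a ^ t * s ^ (-t) := by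
  rw [Real.div_rpow ha hs, Real.rpow_neg hs, div_eq_mul_inv]

lemma rpow_neg_div_tsum_eq_div_rpow_div_tsum {ι : Type*} {s : ι → ℝ} (hs : ∀ i, 0 ≤ s i)
    {a : ℝ} (ha : 0 < a) (t : ℝ) (j : ι) :
    s j ^ (-t) / ∑' i, s i ^ (-t) = (a / s j) ^ t / ∑' i, (a / s i) ^ t := by
  simp only [Real.div_rpow_eq_rpow_mul_rpow_neg ha.le (hs _), tsum_mul_left]
  exact (mul_div_mul_left _ _ (Real.rpow_pos_of_pos ha t).ne').symm

lemma tendsto_rpow_one_div_nhdsGT_zero {x : ℝ} (hx₀ : 0 ≤ x) (hx₁ : x < 1) :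
    Tendsto (fun α : ℝ => x ^ (1 / α)) (𝓝[>] 0) (𝓝 0) := by
  have h : Tendsto (fun α : ℝ => 1 / α) (𝓝[>] 0) atTop := by
    simpa only [one_div] using tendsto_inv_nhdsGT_zero
  exact (tendsto_rpow_atTop_of_base_lt_one x (by linarith) hx₁).comp h

lemma tendsto_tsum_rpow_one_div_nhdsGT_zero {ι : Type*} {x : ι → ℝ}
    {i₀ : ι} (hx₀ : ∀ i, 0 ≤ x i) (hx_i₀ : x i₀ = 1) (hx₁ : ∀ i ≠ i₀, x i < 1)
    {p : ℝ} (hp : 0 < p) (hsum : Summable fun i => x i ^ p) :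
    Tendsto (fun α : ℝ => ∑' i, x i ^ (1 / α)) (𝓝[>] 0) (𝓝 1) := by
  classical
  have hlim (i : ι) :
      Tendsto (fun α : ℝ => x i ^ (1 / α)) (𝓝[>] 0) (𝓝 (if i = i₀ then 1 else 0)) := by
    split_ifs with h
    · simp only [h, hx_i₀, Real.one_rpow, tendsto_const_nhds]
    · exact tendsto_rpow_one_div_nhdsGT_zero (hx₀ i) (hx₁ i h)
  have hbound : ∀ᶠ α in 𝓝[>] (0 : ℝ), ∀ i, ‖x i ^ (1 / α)‖ ≤ x i ^ p := by
    filter_upwards [Ioo_mem_nhdsGT (one_div_pos.2 hp)] with α hα i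
    have hx_le : x i ≤ 1 := by
      rcases eq_or_ne i i₀ with rfl | h
      · exact hx_i₀.le
      · exact (hx₁ i h).le
    have hpα : p ≤ 1 / α := by rw [le_one_div hp hα.1]; exact hα.2.le
    rw [Real.norm_of_nonneg (Real.rpow_nonneg (hx₀ i) _)]
    exact Real.rpow_le_rpow_of_exponent_ge' (hx₀ i) hx_le hp.le hpα
  simpa only [tsum_ite_eq] using tendsto_tsum_of_dominated_convergence hsum hlim hbound

lemma tendsto_of_tendsto_div_self {f : ℝ → ℝ} {c : ℝ}
    (h : Tendsto (fun α => f α / α) (𝓝[>] 0) (𝓝 c)) : Tendsto f (𝓝[>] 0) (𝓝 0) := by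
  have hα : Tendsto (fun α : ℝ => α) (𝓝[>] 0) (𝓝 0) :=
    tendsto_nhdsWithin_of_tendsto_nhds tendsto_id
  refine (mul_zero c ▸ h.mul hα).congr' ?_
  filter_upwards [self_mem_nhdsWithin] with α hα
  exact div_mul_cancel₀ _ (ne_of_gt hα)

theorem stmt_2_general
    (S : ℕ → ℝ) (hpos : 0 < S 0) (hmono : StrictMono S)
    (hsum : ∀ α ∈ Set.Ioo (0 : ℝ) 1, Summable (fun i : ℕ => S i ^ (-(1 / α))))
    (γ : ℝ → ℝ)
    (c : ℝ)
    (hlim : Tendsto (fun α => γ α / α) (𝓝[>] 0) (𝓝 c))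
    (P : ℕ → ℝ → ℝ)
    (hP : ∀ n α, P n α = S n ^ (-(1 / α)) / ∑' i : ℕ, S i ^ (-(1 / α)))
    (n : ℕ) :
    Tendsto (fun α : ℝ => P n α ^ γ α) (𝓝[>] 0) (𝓝 ((S 0 / S n) ^ c)) := by
  have hS (i : ℕ) : 0 < S i := hpos.trans_le (hmono.monotone i.zero_le)
  set b := S 0 / S n
  set Q : ℝ → ℝ := fun α => ∑' i, (S 0 / S i) ^ (1 / α)
  have hPQ (α : ℝ) : P n α = b ^ (1 / α) / Q α := by
    rw [hP, rpow_neg_div_tsum_eq_div_rpow_div_tsum (fun i => (hS i).le) hpos]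
  have hQ : Tendsto Q (𝓝[>] 0) (𝓝 1) := by
    refine tendsto_tsum_rpow_one_div_nhdsGT_zero (i₀ := 0) (p := 2)
      (fun i => (div_pos hpos (hS i)).le)
      (div_self hpos.ne') (fun i hi => (div_lt_one (hS i)).2 (hmono (Nat.pos_of_ne_zero hi)))
      two_pos ?_
    have h := (hsum (1 / 2) (by norm_num)).mul_left (S 0 ^ (2 : ℝ))
    norm_num only [← Real.div_rpow_eq_rpow_mul_rpow_neg hpos.le (hS _).le] at h
    exact h
  have hb₀ : 0 < b := div_pos hpos (hS n)
  have hb : Tendsto (fun α => b ^ (γ α / α)) (𝓝[>] 0) (𝓝 (b ^ c)) :=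
    (Real.continuousAt_const_rpow hb₀.ne').tendsto.comp hlim
  have hQγ : Tendsto (fun α => Q α ^ γ α) (𝓝[>] 0) (𝓝 1) := by
    simpa only [Real.rpow_zero] using
      hQ.rpow (tendsto_of_tendsto_div_self hlim) (Or.inl one_ne_zero)
  refine (div_one (b ^ c) ▸ hb.div hQγ one_ne_zero).congr fun α => ?_
  have hQ_nonneg : 0 ≤ Q α := tsum_nonneg fun i => Real.rpow_nonneg (div_pos hpos (hS i)).le _
  rw [Pi.div_apply, hPQ, Real.div_rpow (Real.rpow_nonneg hb₀.le _) hQ_nonneg,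
    ← Real.rpow_mul hb₀.le, one_div_mul_eq_div]

/-- `S` (indexed from 0, representing `S_1 < S_2 < ⋯`) strictly increasing positive with
`∑ S_i^(-1/α) < ∞` for all `α ∈ (0,1)`, and `γ : (0,1) → (0,1]` with `γ(α)/α → c ∈ [0,∞)`
as `α → 0⁺`.  Then for each `n ≥ 2` (here index `n ≥ 1`),
`P_n(α)^{γ(α)} → (S_1/S_n)^c` as `α → 0⁺`. -/
theorem stmt_2
    (S : ℕ → ℝ) (hpos : 0 < S 0) (hmono : StrictMono S)
    (hsum : ∀ α ∈ Set.Ioo (0 : ℝ) 1, Summable (fun i : ℕ => S i ^ (-(1 / α))))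
    (γ : ℝ → ℝ) (hγ : ∀ α ∈ Set.Ioo (0 : ℝ) 1, γ α ∈ Set.Ioc (0 : ℝ) 1)
    (c : ℝ) (hc : 0 ≤ c)
    (hlim : Tendsto (fun α => γ α / α) (𝓝[>] 0) (𝓝 c))
    (P : ℕ → ℝ → ℝ)
    (hP : ∀ n α, P n α = S n ^ (-(1 / α)) / ∑' i : ℕ, S i ^ (-(1 / α)))
    (n : ℕ) (hn : 1 ≤ n) :
    Tendsto (fun α : ℝ => P n α ^ γ α) (𝓝[>] 0) (𝓝 ((S 0 / S n) ^ c)) :=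
  stmt_2_general S hpos hmono hsum γ c hlim P hP n
end

section
/- Let (S_n) be a strictly increasing sequence of positive reals with ∑ S_n^{-1/α} < ∞ for all α ∈ (0,1), and suppose γ(α)/α → ∞ as α → 0⁺ with γ(α) ∈ (0,1]. Then for each n ≥ 2, P_n(α)^{γ(α)} → 0 as α → 0⁺, where P_n(α) = S_n^{-1/α} / ∑_{i=1}^∞ S_i^{-1/α}. -/
open Filter Topology

/-- `S` (indexed from 0, representing `S_1 < S_2 < ⋯`) strictly increasing positive with
`∑ S_i^(-1/α) < ∞` for all `α ∈ (0,1)`, and `γ : (0,1) → (0,1]` with `γ(α)/α → ∞`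
as `α → 0⁺`.  Then for each `n ≥ 2` (here index `n ≥ 1`),
`P_n(α)^{γ(α)} → 0` as `α → 0⁺`. -/
theorem stmt_3
    (S : ℕ → ℝ) (hpos : 0 < S 0) (hmono : StrictMono S)
    (hsum : ∀ α ∈ Set.Ioo (0 : ℝ) 1, Summable (fun i : ℕ => S i ^ (-(1 / α))))
    (γ : ℝ → ℝ) (hγ : ∀ α ∈ Set.Ioo (0 : ℝ) 1, γ α ∈ Set.Ioc (0 : ℝ) 1)
    (hlim : Tendsto (fun α => γ α / α) (𝓝[>] 0) atTop)
    (P : ℕ → ℝ → ℝ)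
    (hP : ∀ n α, P n α = S n ^ (-(1 / α)) / ∑' i : ℕ, S i ^ (-(1 / α)))
    (n : ℕ) (hn : 1 ≤ n) :
    Tendsto (fun α : ℝ => P n α ^ γ α) (𝓝[>] 0) (𝓝 0) := by
  have hSpos : ∀ i, 0 < S i := fun i => lt_of_lt_of_le hpos (hmono.monotone (Nat.zero_le i))
  have hSn : 0 < S n := hSpos n
  have h0n : S 0 < S n := hmono (by omega)
  set r := S 0 / S n with hr
  have hr0 : 0 < r := div_pos hpos hSn
  have hr1 : r < 1 := (div_lt_one hSn).2 h0n
  have hg : Tendsto (fun α => r ^ (γ α / α)) (𝓝[>] 0) (𝓝 0) :=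
    (tendsto_rpow_atTop_of_base_lt_one r (by linarith) hr1).comp hlim
  have hmem : Set.Ioo (0:ℝ) 1 ∈ 𝓝[>] (0:ℝ) :=
    Ioo_mem_nhdsGT_of_mem (by constructor <;> norm_num)
  refine tendsto_of_tendsto_of_tendsto_of_le_of_le' tendsto_const_nhds hg ?_ ?_
  · filter_upwards [hmem] with α hα
    have hγα := (hγ α hα).1
    have hPnonneg : 0 ≤ P n α := by
      rw [hP]
      exact div_nonneg (Real.rpow_nonneg hSn.le _)
        (tsum_nonneg fun i => Real.rpow_nonneg (hSpos i).le _)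
    exact Real.rpow_nonneg hPnonneg _
  · filter_upwards [hmem] with α hα
    have hα0 : 0 < α := hα.1
    have hγα := hγ α hα
    set x := -(1/α) with hx
    have hsummable := hsum α hα
    have hterm : ∀ i, 0 ≤ S i ^ x := fun i => Real.rpow_nonneg (hSpos i).le _
    have hT : S 0 ^ x ≤ ∑' i : ℕ, S i ^ x :=
      Summable.le_tsum hsummable 0 (fun i _ => hterm i)
    have hT0 : 0 < S 0 ^ x := Real.rpow_pos_of_pos hpos _
    have hPle : P n α ≤ S n ^ x / S 0 ^ x := by
      rw [hP]
      gcongr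
    have hkey : S n ^ x / S 0 ^ x = r ^ (1/α) := by
      rw [hr, Real.div_rpow hpos.le hSn.le, hx, Real.rpow_neg hSn.le,
        Real.rpow_neg hpos.le, inv_div_inv]
    have hPle2 : P n α ≤ r ^ (1/α) := hkey ▸ hPle
    have hPnonneg : 0 ≤ P n α := by
      rw [hP]
      exact div_nonneg (hterm n) (tsum_nonneg hterm)
    calc P n α ^ γ α ≤ (r ^ (1/α)) ^ γ α :=
          Real.rpow_le_rpow hPnonneg hPle2 hγα.1.le
      _ = r ^ (γ α / α) := by
          rw [← Real.rpow_mul hr0.le]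
          congr 1
          field_simp
end

section
/- For any u ∈ (0, π) and v ∈ (0, 1), the function v ↦ v·cot(v·u) − cot(u) is nonincreasing in v; equivalently, d/dv [v cot(vu) − cot u] ≤ 0. -/
open Real Set

/-!
Writing `w = v u`, we have `v cot (v u) = (w cot w) / u`, so it suffices that `x ↦ x cot x` is
antitone on `(0, π)`. Its derivative is `(sin x cos x - x) / sin² x`, which is nonpositive because
`sin x cos x = sin (2x) / 2 ≤ x`.
-/

namespace Real

lemma sin_mul_cos_le {x : ℝ} (hx : 0 ≤ x) : sin x * cos x ≤ x := by
  have h := sin_le (by positivity : 0 ≤ 2 * x)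
  rw [sin_two_mul] at h
  linarith

lemma hasDerivAt_mul_cot {x : ℝ} (hx : sin x ≠ 0) :
    HasDerivAt (fun x => x * cot x) ((sin x * cos x - x) / sin x ^ 2) x := by
  have h : HasDerivAt (fun x => x * cos x / sin x)
      (((1 * cos x + x * -sin x) * sin x - x * cos x * cos x) / sin x ^ 2) x :=
    ((hasDerivAt_id' x).mul (hasDerivAt_cos x)).div (hasDerivAt_sin x) hx
  simp only [cot_eq_cos_div_sin, ← mul_div_assoc]
  refine h.congr_deriv ?_
  rw [div_left_inj' (pow_ne_zero 2 hx)]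
  linear_combination -x * sin_sq_add_cos_sq x

lemma antitoneOn_mul_cot : AntitoneOn (fun x => x * cot x) (Ioo 0 π) := by
  have hsin : ∀ x ∈ Ioo 0 π, sin x ≠ 0 := fun x hx => (sin_pos_of_pos_of_lt_pi hx.1 hx.2).ne'
  refine antitoneOn_of_hasDerivWithinAt_nonpos (f' := fun x => (sin x * cos x - x) / sin x ^ 2)
    (convex_Ioo 0 π) ?_ (fun x hx => ?_) fun x hx => ?_
  · exact fun x hx => (hasDerivAt_mul_cot (hsin x hx)).continuousAt.continuousWithinAt
  · rw [interior_Ioo] at hx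
    exact (hasDerivAt_mul_cot (hsin x hx)).hasDerivWithinAt
  · rw [interior_Ioo] at hx
    exact div_nonpos_of_nonpos_of_nonneg (by linarith [sin_mul_cos_le hx.1.le]) (sq_nonneg _)

end Real

/-- For `u ∈ (0, π)`, the function `v ↦ v·cot(v·u) − cot u` is nonincreasing on `(0,1)`. -/
theorem stmt_7 (u : ℝ) (hu : u ∈ Ioo 0 π) :
    AntitoneOn (fun v : ℝ => v * Real.cot (v * u) - Real.cot u) (Ioo (0 : ℝ) 1) := by
  obtain ⟨hu0, huπ⟩ := hu
  have hmem : ∀ v ∈ Ioo (0 : ℝ) 1, v * u ∈ Ioo 0 π := fun v hv =>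
    ⟨mul_pos hv.1 hu0, by nlinarith [hv.2]⟩
  intro a ha b hb hab
  have key := antitoneOn_mul_cot (hmem a ha) (hmem b hb) (by gcongr)
  simp only [sub_le_sub_iff_right]
  exact le_of_mul_le_mul_left (by linear_combination key) hu0
end

section
/- For any fixed α ∈ (0,1), Zolotarev's function A(u) = [sin^α(αu) · sin^{1−α}((1−α)u) / sin u]^{1/(1−α)} is nondecreasing in u on (0, π), with lim_{u→0⁺} A(u) = (1−α)·α^{α/(1−α)} and lim_{u→π⁻} A(u) = +∞. -/
/-!
Write `A = R ^ (1 / (1 - α))` with `R u = sin (α u) ^ α * sin ((1 - α) u) ^ (1 - α) / sin u`.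
The derivative of `log R` is `α² cot (α u) + (1 - α)² cot ((1 - α) u) - cot u`, and because
`α u + (1 - α) u = u` the addition formula for `cot` turns this into a sum of squares divided by
`sin (α u) sin ((1 - α) u) sin u`, so `R` is increasing. Near `0` each `sin (c u)` is `c u`
times `sinc (c u) → 1`, and the powers of `u` cancel, leaving `R → α ^ α (1 - α) ^ (1 - α)`;
near `π` the numerator of `R` stays positive while `sin u ↓ 0`.
-/

open Real Set Filter Topology

lemma sin_mul_pos_of_mem_Ioo {c u : ℝ} (hc : 0 < c) (hc1 : c ≤ 1) (hu : u ∈ Ioo 0 π) :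
    0 < sin (c * u) :=
  sin_pos_of_pos_of_lt_pi (mul_pos hc hu.1) (by nlinarith [hu.1, hu.2])

lemma cot_add_lt_sq_mul_cot_add_sq_mul_cot {a b x y : ℝ} (hab : a + b = 1) (hx : 0 < sin x)
    (hy : 0 < sin y) (hxy : 0 < sin (x + y)) :
    cot (x + y) < a ^ 2 * cot x + b ^ 2 * cot y := by
  obtain rfl : b = 1 - a := by linarith
  have hsos : a ^ 2 * cot x + (1 - a) ^ 2 * cot y - cot (x + y) =
      ((a * cos x * sin y - (1 - a) * sin x * cos y) ^ 2 + (sin x * sin y) ^ 2) /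
        (sin x * sin y * sin (x + y)) := by
    rw [cot_eq_cos_div_sin, cot_eq_cos_div_sin, cot_eq_cos_div_sin]
    field_simp
    rw [sin_add, cos_add]
    ring
  have : 0 < a ^ 2 * cot x + (1 - a) ^ 2 * cot y - cot (x + y) := by
    rw [hsos]
    positivity
  linarith

lemma hasDerivAt_log_sin_mul {c u : ℝ} (h : sin (c * u) ≠ 0) :
    HasDerivAt (fun u => log (sin (c * u))) (c * cot (c * u)) u := by
  have hsin := (hasDerivAt_sin (c * u)).comp u ((hasDerivAt_id u).const_mul c)
  refine (hsin.log h).congr_deriv ?_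
  simp only [Function.comp_apply, cot_eq_cos_div_sin, mul_one]
  ring

lemma sin_rpow_eq_sinc_rpow_mul_rpow {x : ℝ} (hx : 0 < x) (hsin : 0 ≤ sin x) (e : ℝ) :
    sin x ^ e = sinc x ^ e * x ^ e := by
  rw [sinc_of_ne_zero hx.ne', ← mul_rpow (div_nonneg hsin hx.le) hx.le,
    div_mul_cancel₀ _ hx.ne']

noncomputable def zolotarevRatio (α u : ℝ) : ℝ :=
  sin (α * u) ^ α * sin ((1 - α) * u) ^ (1 - α) / sin u

noncomputable def zolotarevLogRatio (α u : ℝ) : ℝ :=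
  α * log (sin (α * u)) + (1 - α) * log (sin ((1 - α) * u)) - log (sin u)

section

variable {α : ℝ} (hα : α ∈ Ioo (0 : ℝ) 1)
include hα

lemma zolotarevRatio_eq_exp {u : ℝ} (hu : u ∈ Ioo 0 π) :
    zolotarevRatio α u = exp (zolotarevLogRatio α u) := by
  have h₁ := sin_mul_pos_of_mem_Ioo hα.1 hα.2.le hu
  have h₂ := sin_mul_pos_of_mem_Ioo (sub_pos.2 hα.2) (sub_le_self _ hα.1.le) hu
  rw [zolotarevLogRatio, exp_sub, exp_add, exp_log (sin_pos_of_pos_of_lt_pi hu.1 hu.2),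
    zolotarevRatio, rpow_def_of_pos h₁, rpow_def_of_pos h₂, mul_comm (log _),
    mul_comm (log _)]

lemma hasDerivAt_zolotarevLogRatio {u : ℝ} (hu : u ∈ Ioo 0 π) :
    HasDerivAt (zolotarevLogRatio α)
      (α ^ 2 * cot (α * u) + (1 - α) ^ 2 * cot ((1 - α) * u) - cot u) u := by
  have h₁ := hasDerivAt_log_sin_mul (sin_mul_pos_of_mem_Ioo hα.1 hα.2.le hu).ne'
  have h₂ := hasDerivAt_log_sin_mul
    (sin_mul_pos_of_mem_Ioo (sub_pos.2 hα.2) (sub_le_self _ hα.1.le) hu).ne'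
  have h := (hasDerivAt_sin u).log (sin_pos_of_pos_of_lt_pi hu.1 hu.2).ne'
  refine ((h₁.const_mul α).add (h₂.const_mul (1 - α)) |>.sub h).congr_deriv ?_
  rw [cot_eq_cos_div_sin u]
  ring

lemma strictMonoOn_zolotarevLogRatio : StrictMonoOn (zolotarevLogRatio α) (Ioo 0 π) := by
  refine strictMonoOn_of_hasDerivWithinAt_pos (convex_Ioo 0 π)
    (fun u hu => (hasDerivAt_zolotarevLogRatio hα hu).continuousAt.continuousWithinAt)
    (fun u hu =>
      (hasDerivAt_zolotarevLogRatio hα (by rwa [interior_Ioo] at hu)).hasDerivWithinAt)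
    (fun u hu => ?_)
  rw [interior_Ioo] at hu
  have hsplit : α * u + (1 - α) * u = u := by ring
  have := cot_add_lt_sq_mul_cot_add_sq_mul_cot (add_sub_cancel α 1)
    (sin_mul_pos_of_mem_Ioo hα.1 hα.2.le hu)
    (sin_mul_pos_of_mem_Ioo (sub_pos.2 hα.2) (sub_le_self _ hα.1.le) hu)
    (by rw [hsplit]; exact sin_pos_of_pos_of_lt_pi hu.1 hu.2)
  rw [hsplit] at this
  linarith

lemma strictMonoOn_zolotarevRatio : StrictMonoOn (zolotarevRatio α) (Ioo 0 π) := by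
  intro x hx y hy hxy
  rw [zolotarevRatio_eq_exp hα hx, zolotarevRatio_eq_exp hα hy]
  exact exp_lt_exp.2 (strictMonoOn_zolotarevLogRatio hα hx hy hxy)

lemma zolotarevRatio_pos {u : ℝ} (hu : u ∈ Ioo 0 π) : 0 < zolotarevRatio α u :=
  zolotarevRatio_eq_exp hα hu ▸ exp_pos _

lemma zolotarevRatio_eq_sinc {u : ℝ} (hu : u ∈ Ioo 0 π) :
    zolotarevRatio α u = sinc (α * u) ^ α * sinc ((1 - α) * u) ^ (1 - α) / sinc u *
      (α ^ α * (1 - α) ^ (1 - α)) := by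
  have hβ : 0 < 1 - α := sub_pos.2 hα.2
  rw [zolotarevRatio,
    sin_rpow_eq_sinc_rpow_mul_rpow (mul_pos hα.1 hu.1)
      (sin_mul_pos_of_mem_Ioo hα.1 hα.2.le hu).le,
    sin_rpow_eq_sinc_rpow_mul_rpow (mul_pos hβ hu.1)
      (sin_mul_pos_of_mem_Ioo hβ (sub_le_self _ hα.1.le) hu).le,
    sinc_of_ne_zero hu.1.ne' (x := u), mul_rpow hα.1.le hu.1.le, mul_rpow hβ.le hu.1.le]
  have hu_pow : u ^ α * u ^ (1 - α) = u := by
    rw [← rpow_add hu.1, add_sub_cancel, rpow_one]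
  rw [div_div_eq_mul_div]
  linear_combination (sinc (α * u) ^ α * sinc ((1 - α) * u) ^ (1 - α) * α ^ α *
    (1 - α) ^ (1 - α) / sin u) * hu_pow

lemma tendsto_zolotarevRatio_nhdsGT_zero :
    Tendsto (zolotarevRatio α) (𝓝[>] 0) (𝓝 (α ^ α * (1 - α) ^ (1 - α))) := by
  have hcont : ContinuousAt (fun u => sinc (α * u) ^ α * sinc ((1 - α) * u) ^ (1 - α) /
      sinc u * (α ^ α * (1 - α) ^ (1 - α))) 0 := by
    have hsinc (c : ℝ) : Continuous fun u => sinc (c * u) :=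
      continuous_sinc.comp (continuous_const_mul c)
    refine ((((hsinc α).continuousAt.rpow_const (Or.inr hα.1.le)).mul
      ((hsinc (1 - α)).continuousAt.rpow_const (Or.inr (sub_pos.2 hα.2).le))).div
      continuous_sinc.continuousAt (by simp [sinc_zero])).mul continuousAt_const
  have hlim := hcont.tendsto.mono_left (nhdsWithin_le_nhds (s := Ioi 0))
  simp only [mul_zero, sinc_zero, one_rpow, div_one, one_mul] at hlim
  refine hlim.congr' ?_
  filter_upwards [Ioo_mem_nhdsGT pi_pos] with u hu
  exact (zolotarevRatio_eq_sinc hα hu).symm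

lemma tendsto_zolotarevRatio_nhdsLT_pi : Tendsto (zolotarevRatio α) (𝓝[<] π) atTop := by
  have hβ : 0 < 1 - α := sub_pos.2 hα.2
  have hnum : Tendsto (fun u => sin (α * u) ^ α * sin ((1 - α) * u) ^ (1 - α)) (𝓝[<] π)
      (𝓝 (sin (α * π) ^ α * sin ((1 - α) * π) ^ (1 - α))) := by
    have hsin (c : ℝ) : Continuous fun u => sin (c * u) :=
      continuous_sin.comp (continuous_const_mul c)
    exact (((hsin α).continuousAt.rpow_const (Or.inr hα.1.le)).mul
      ((hsin (1 - α)).continuousAt.rpow_const (Or.inr hβ.le))).tendsto.mono_left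
        nhdsWithin_le_nhds
  have hnum_pos : 0 < sin (α * π) ^ α * sin ((1 - α) * π) ^ (1 - α) := by
    have h₁ : 0 < sin (α * π) :=
      sin_pos_of_pos_of_lt_pi (mul_pos hα.1 pi_pos) (by nlinarith [hα.2, pi_pos])
    have h₂ : 0 < sin ((1 - α) * π) :=
      sin_pos_of_pos_of_lt_pi (mul_pos hβ pi_pos) (by nlinarith [hα.1, pi_pos])
    positivity
  have hsin : Tendsto sin (𝓝[<] π) (𝓝[>] 0) := by
    refine tendsto_nhdsWithin_of_tendsto_nhds_of_eventually_within _ ?_ ?_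
    · simpa using (continuous_sin.tendsto π).mono_left (nhdsWithin_le_nhds (s := Iio π))
    · filter_upwards [Ioo_mem_nhdsLT pi_pos] with u hu
      exact sin_pos_of_pos_of_lt_pi hu.1 hu.2
  exact (hnum.pos_mul_atTop hnum_pos (tendsto_inv_nhdsGT_zero.comp hsin)).congr
    fun u => (div_eq_mul_inv _ _).symm

end

/-- For fixed `α ∈ (0,1)`, Zolotarev's function
`A(u) = [sin(αu)^α · sin((1−α)u)^(1−α) / sin u]^(1/(1−α))` is nondecreasing on `(0, π)`,
with `A(u) → (1−α)·α^(α/(1−α))` as `u → 0⁺` and `A(u) → ∞` as `u → π⁻`. -/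
theorem stmt_8 (α : ℝ) (hα : α ∈ Ioo (0 : ℝ) 1)
    (A : ℝ → ℝ)
    (hA : ∀ u, A u =
      ((Real.sin (α * u)) ^ α * (Real.sin ((1 - α) * u)) ^ (1 - α) / Real.sin u)
        ^ (1 / (1 - α))) :
    MonotoneOn A (Ioo 0 π) ∧
    Tendsto A (𝓝[>] 0) (𝓝 ((1 - α) * α ^ (α / (1 - α)))) ∧
    Tendsto A (𝓝[<] π) atTop := by
  have hβ : 0 < 1 - α := sub_pos.2 hα.2
  have hexp : 0 < 1 / (1 - α) := one_div_pos.2 hβ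
  obtain rfl : A = fun u => zolotarevRatio α u ^ (1 / (1 - α)) := funext hA
  refine ⟨fun x hx y hy hxy => ?_, ?_, (tendsto_rpow_atTop hexp).comp
    (tendsto_zolotarevRatio_nhdsLT_pi hα)⟩
  · exact rpow_le_rpow (zolotarevRatio_pos hα hx).le
      ((strictMonoOn_zolotarevRatio hα).monotoneOn hx hy hxy) hexp.le
  · have hlimit :
        (α ^ α * (1 - α) ^ (1 - α)) ^ (1 / (1 - α)) = (1 - α) * α ^ (α / (1 - α)) := by
      rw [mul_rpow (rpow_nonneg hα.1.le _) (rpow_nonneg hβ.le _), ← rpow_mul hα.1.le,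
        ← rpow_mul hβ.le, mul_one_div, mul_one_div, div_self hβ.ne', rpow_one, mul_comm]
    rw [← hlimit]
    exact ((continuousAt_rpow_const _ _ (Or.inr hexp.le)).tendsto).comp
      (tendsto_zolotarevRatio_nhdsGT_zero hα)
end

section
/- Let δ ∈ (0,1) and ρ_1 = ρ_1(α) be the stable subordinator of index α at time 1, with P(ρ_1 ≤ 1−δ) = (1/π)∫_0^π exp(−A(u)/(1−δ)^{α/(1−α)}) du where A is Zolotarev's function. Then lim_{α→1⁻} (1−α)·log log (1/P(ρ_1 ≤ 1−δ)) = log(1/(1−δ)). -/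
/-!
Write `c_α = (1 - α) α^(α/(1-α))` and `x_α = (1 - δ)^(α/(1-α))`. Concavity of `sin` gives
`sin (α u) ≥ α sin u`, whence `A_α ≥ c_α` on `(0, π)`; and `u - u³/6 ≤ sin u ≤ u` gives
`A_α ≤ 2 c_α` on `(0, √(1-α))`. Integrating,
`c_α / x_α ≤ log (1 / P) ≤ log (π / √(1-α)) + 2 c_α / x_α`.
After multiplying the logarithms of these bounds by `1 - α`, the additive and multiplicative
constants disappear in the limit, and `(1 - α) log (c_α / x_α) → log (1 / (1 - δ))`.
-/

open Real Set Filter Topology intervalIntegral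

open MeasureTheory

noncomputable def zolotarev (α u : ℝ) : ℝ :=
  (sin (α * u) ^ α * sin ((1 - α) * u) ^ (1 - α) / sin u) ^ (1 / (1 - α))

-- `A_α(0⁺)`, which is also the infimum of `A_α` on `(0, π)`.
noncomputable def zolotarevAtZero (α : ℝ) : ℝ :=
  (1 - α) * α ^ (α / (1 - α))

lemma zolotarevAtZero_pos {α : ℝ} (hα : α ∈ Ioo 0 1) : 0 < zolotarevAtZero α :=
  mul_pos (sub_pos.2 hα.2) (rpow_pos_of_pos hα.1 _)

lemma rpow_one_div_one_sub_eq_zolotarevAtZero {α : ℝ} (hα : α ∈ Ioo 0 1) :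
    (α ^ α * (1 - α) ^ (1 - α)) ^ (1 / (1 - α)) = zolotarevAtZero α := by
  have ht : 0 < 1 - α := sub_pos.2 hα.2
  rw [mul_rpow (rpow_nonneg hα.1.le _) (rpow_nonneg ht.le _), ← rpow_mul hα.1.le, ← rpow_mul ht.le,
    mul_one_div, mul_one_div, div_self ht.ne', rpow_one, zolotarevAtZero, mul_comm]

lemma rpow_mul_rpow_one_sub {a b s α : ℝ} (ha : 0 ≤ a) (hb : 0 ≤ b) (hs : 0 < s) :
    (a * s) ^ α * (b * s) ^ (1 - α) = a ^ α * b ^ (1 - α) * s := by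
  rw [mul_rpow ha hs.le, mul_rpow hb hs.le, mul_mul_mul_comm, ← rpow_add hs, add_sub_cancel,
    rpow_one]

lemma mul_sin_le_sin_mul {a u : ℝ} (ha₀ : 0 ≤ a) (ha₁ : a ≤ 1) (hu : u ∈ Icc 0 π) :
    a * sin u ≤ sin (a * u) := by
  simpa using strictConcaveOn_sin_Icc.concaveOn.2 ⟨le_rfl, pi_pos.le⟩ hu (sub_nonneg.2 ha₁) ha₀
    (sub_add_cancel 1 a)

lemma zolotarev_nonneg {α u : ℝ} (hα : α ∈ Icc 0 1) (hu : u ∈ Icc 0 π) :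
    0 ≤ zolotarev α u := by
  have hsin : ∀ a ∈ Icc (0 : ℝ) 1, 0 ≤ sin (a * u) := fun a ha =>
    sin_nonneg_of_nonneg_of_le_pi (mul_nonneg ha.1 hu.1)
      ((mul_le_of_le_one_left hu.1 ha.2).trans hu.2)
  have hsin₁ := hsin α hα
  have hsin₂ := hsin (1 - α) ⟨sub_nonneg.2 hα.2, by linarith [hα.1]⟩
  have hsin₃ := sin_nonneg_of_nonneg_of_le_pi hu.1 hu.2
  unfold zolotarev
  positivity

lemma zolotarevAtZero_le_zolotarev {α u : ℝ} (hα : α ∈ Ioo 0 1) (hu : u ∈ Ioo 0 π) :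
    zolotarevAtZero α ≤ zolotarev α u := by
  have ht : 0 < 1 - α := sub_pos.2 hα.2
  have hs : 0 < sin u := sin_pos_of_pos_of_lt_pi hu.1 hu.2
  have h₁ := mul_sin_le_sin_mul hα.1.le hα.2.le (Ioo_subset_Icc_self hu)
  have h₂ := mul_sin_le_sin_mul ht.le (by linarith [hα.1]) (Ioo_subset_Icc_self hu)
  have hα₀ := hα.1
  have hsin₁ : 0 ≤ sin (α * u) := (mul_nonneg hα₀.le hs.le).trans h₁
  rw [← rpow_one_div_one_sub_eq_zolotarevAtZero hα, zolotarev]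
  gcongr ?_ ^ _
  rw [le_div_iff₀ hs, ← rpow_mul_rpow_one_sub hα₀.le ht.le hs]
  gcongr

lemma zolotarev_le_two_mul_zolotarevAtZero {α u : ℝ} (hα : α ∈ Ioo 0 1) (hu : 0 < u)
    (hu₂ : u ^ 2 ≤ 1 - α) : zolotarev α u ≤ 2 * zolotarevAtZero α := by
  obtain ⟨hα₀, hα₁⟩ := hα
  set t := 1 - α with ht_def
  have ht : 0 < t := sub_pos.2 hα₁
  have ht₁ : t ≤ 1 := by linarith
  have hq : 0 < 1 - t / 6 := by linarith
  have hsin : u * (1 - t / 6) ≤ sin u := by nlinarith [sin_gt_sub_cube hu]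
  have hs : 0 < sin u := lt_of_lt_of_le (by positivity) hsin
  have hsin₁ : 0 ≤ sin (α * u) :=
    sin_nonneg_of_nonneg_of_le_pi (by positivity) (by nlinarith [pi_gt_three])
  have hsin₂ : 0 ≤ sin (t * u) :=
    sin_nonneg_of_nonneg_of_le_pi (by positivity) (by nlinarith [pi_gt_three])
  have hnum : sin (α * u) ^ α * sin (t * u) ^ t ≤ α ^ α * t ^ t * u := by
    rw [← rpow_mul_rpow_one_sub hα₀.le ht.le hu]
    gcongr <;> exact sin_le (by positivity)
  have hbase : sin (α * u) ^ α * sin (t * u) ^ t / sin u ≤ α ^ α * t ^ t / (1 - t / 6) := by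
    rw [div_le_div_iff₀ (by positivity) hq]
    calc sin (α * u) ^ α * sin (t * u) ^ t * (1 - t / 6)
        ≤ α ^ α * t ^ t * u * (1 - t / 6) := by gcongr
      _ ≤ α ^ α * t ^ t * sin u := by rw [mul_assoc]; gcongr
  have hbern : 5 / 6 ≤ (1 - t / 6) ^ (1 / t) := by
    have h := one_add_mul_self_le_rpow_one_add (s := -(t / 6)) (by linarith)
      (one_le_one_div ht ht₁)
    rw [mul_neg, one_div_mul_eq_div, div_div_cancel_left' ht.ne', ← sub_eq_add_neg,
      ← sub_eq_add_neg] at h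
    linarith
  have hc := zolotarevAtZero_pos ⟨hα₀, hα₁⟩
  calc zolotarev α u ≤ (α ^ α * t ^ t / (1 - t / 6)) ^ (1 / t) := by
        rw [zolotarev, ← ht_def]; gcongr
    _ = zolotarevAtZero α / (1 - t / 6) ^ (1 / t) := by
        rw [div_rpow (by positivity) hq.le, rpow_one_div_one_sub_eq_zolotarevAtZero ⟨hα₀, hα₁⟩]
    _ ≤ zolotarevAtZero α / (5 / 6) := by gcongr
    _ ≤ 2 * zolotarevAtZero α := by linarith

lemma intervalIntegrable_exp_neg_zolotarev_div {α x : ℝ} (hα : α ∈ Icc 0 1) (hx : 0 ≤ x) :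
    IntervalIntegrable (fun u => exp (-zolotarev α u / x)) volume 0 π := by
  refine (intervalIntegrable_const (c := (1 : ℝ))).mono_fun
    (by unfold zolotarev; fun_prop : Measurable _).aestronglyMeasurable ?_
  rw [uIoc_of_le pi_pos.le]
  filter_upwards [ae_restrict_mem measurableSet_Ioc] with u hu
  rw [norm_one, norm_of_nonneg (exp_pos _).le, exp_le_one_iff]
  exact div_nonpos_of_nonpos_of_nonneg
    (neg_nonpos.2 (zolotarev_nonneg hα (Ioc_subset_Icc_self hu))) hx

lemma integral_exp_neg_zolotarev_div_le {α x : ℝ} (hα : α ∈ Ioo 0 1) (hx : 0 < x) :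
    (1 / π) * ∫ u in (0 : ℝ)..π, exp (-zolotarev α u / x) ≤ exp (-(zolotarevAtZero α / x)) := by
  have h : ∫ u in (0 : ℝ)..π, exp (-zolotarev α u / x) ≤
      ∫ _ in (0 : ℝ)..π, exp (-(zolotarevAtZero α / x)) :=
    integral_mono_on_of_le_Ioo pi_pos.le
      (intervalIntegrable_exp_neg_zolotarev_div (Ioo_subset_Icc_self hα) hx.le)
      intervalIntegrable_const fun u hu => by
        rw [neg_div]
        gcongr exp (-(?_ / x))
        exact zolotarevAtZero_le_zolotarev hα hu
  rw [intervalIntegral.integral_const, sub_zero, smul_eq_mul] at h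
  calc (1 / π) * ∫ u in (0 : ℝ)..π, exp (-zolotarev α u / x)
      ≤ (1 / π) * (π * exp (-(zolotarevAtZero α / x))) := by gcongr
    _ = exp (-(zolotarevAtZero α / x)) := by field_simp

lemma exp_neg_le_integral_exp_neg_zolotarev_div {α x : ℝ} (hα : α ∈ Ioo 0 1) (hx : 0 < x) :
    exp (-(log (π / √(1 - α)) + 2 * (zolotarevAtZero α / x))) ≤
      (1 / π) * ∫ u in (0 : ℝ)..π, exp (-zolotarev α u / x) := by
  set η := √(1 - α)
  have hη₀ : 0 < η := sqrt_pos.2 (sub_pos.2 hα.2)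
  have hηπ : η ≤ π := (sqrt_le_one.2 (by linarith [hα.1])).trans (by linarith [pi_gt_three])
  have hint := intervalIntegrable_exp_neg_zolotarev_div (Ioo_subset_Icc_self hα) hx.le
  have hnear : η * exp (-(2 * (zolotarevAtZero α / x))) ≤
      ∫ u in (0 : ℝ)..η, exp (-zolotarev α u / x) := by
    have h : ∫ _ in (0 : ℝ)..η, exp (-(2 * (zolotarevAtZero α / x))) ≤
        ∫ u in (0 : ℝ)..η, exp (-zolotarev α u / x) :=
      integral_mono_on_of_le_Ioo hη₀.le intervalIntegrable_const
      (hint.mono_set (uIcc_subset_uIcc left_mem_uIcc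
        (by rw [uIcc_of_le pi_pos.le]; exact ⟨hη₀.le, hηπ⟩)))
      fun u hu => by
        rw [← mul_div_assoc, neg_div]
        gcongr exp (-(?_ / x))
        refine zolotarev_le_two_mul_zolotarevAtZero hα hu.1 ?_
        rw [← sq_sqrt (sub_pos.2 hα.2).le]
        exact pow_le_pow_left₀ hu.1.le hu.2.le 2
    rwa [intervalIntegral.integral_const, sub_zero, smul_eq_mul] at h
  have hsub : ∫ u in (0 : ℝ)..η, exp (-zolotarev α u / x) ≤
      ∫ u in (0 : ℝ)..π, exp (-zolotarev α u / x) :=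
    integral_mono_interval le_rfl hη₀.le hηπ (.of_forall fun _ => (exp_pos _).le) hint
  calc exp (-(log (π / η) + 2 * (zolotarevAtZero α / x)))
      = (1 / π) * (η * exp (-(2 * (zolotarevAtZero α / x)))) := by
        rw [neg_add, exp_add, exp_neg, exp_log (div_pos pi_pos hη₀)]
        field_simp
    _ ≤ _ := by gcongr; exact hnear.trans hsub

lemma log_one_div_mem_Icc {p v w : ℝ} (hw : exp (-w) ≤ p) (hv : p ≤ exp (-v)) :
    log (1 / p) ∈ Icc v w := by
  have hp : 0 < p := (exp_pos _).trans_le hw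
  rw [one_div, log_inv]
  constructor
  · linarith [(log_le_iff_le_exp hp).2 hv]
  · linarith [(le_log_iff_exp_le hp).2 hw]

lemma tendsto_mul_log_of_le_of_le_add {ι : Type*} {l : Filter ι} {t a b z : ι → ℝ} {L : ℝ}
    (hL : 0 < L) (ht : Tendsto t l (𝓝 0)) (ht₀ : ∀ᶠ i in l, 0 < t i)
    (ha : Tendsto (fun i => t i * a i) l (𝓝 0)) (ha₀ : ∀ᶠ i in l, 0 ≤ a i)
    (hb : Tendsto (fun i => t i * log (b i)) l (𝓝 L)) (hb₀ : ∀ᶠ i in l, 0 < b i)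
    (hz : ∀ᶠ i in l, z i ∈ Icc (b i) (a i + 2 * b i)) :
    Tendsto (fun i => t i * log (z i)) l (𝓝 L) := by
  have hb₁ : ∀ᶠ i in l, 1 < b i := by
    filter_upwards [hb.eventually (eventually_gt_nhds hL), ht₀, hb₀] with i hi hti hbi
    exact (log_pos_iff hbi.le).1 (pos_of_mul_pos_right hi hti.le)
  have hupper : Tendsto (fun i => t i * log 4 + t i * a i + t i * log (b i)) l (𝓝 L) := by
    simpa using ((ht.mul_const (log 4)).add ha).add hb
  refine tendsto_of_tendsto_of_tendsto_of_le_of_le' hb hupper ?_ ?_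
  · filter_upwards [ht₀, hb₀, hz] with i hti hbi hzi
    exact mul_le_mul_of_nonneg_left (log_le_log hbi hzi.1) hti.le
  · filter_upwards [ht₀, ha₀, hb₁, hz] with i hti hai hbi ⟨hbz, hza⟩
    have hz₀ : 0 < z i := by linarith
    have hlog : log (z i) ≤ log 4 + a i + log (b i) :=
      calc log (z i) ≤ log (4 * (1 + a i) * b i) := log_le_log hz₀ (by nlinarith)
        _ = log 4 + log (1 + a i) + log (b i) := by
          rw [log_mul (by positivity) (by positivity), log_mul (by norm_num) (by positivity)]
        _ ≤ log 4 + a i + log (b i) := by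
          linarith [log_le_sub_one_of_pos (by linarith : 0 < 1 + a i)]
    nlinarith

lemma tendsto_one_sub_mul_log_zolotarevAtZero_div {r : ℝ} (hr : 0 < r) :
    Tendsto (fun α => (1 - α) * log (zolotarevAtZero α / r ^ (α / (1 - α))))
      (𝓝[Ioo 0 1] 1) (𝓝 (log (1 / r))) := by
  have hcont : Continuous fun α : ℝ => (1 - α) * log (1 - α) + α * log α + α * log (1 / r) :=
    ((continuous_mul_log.comp (continuous_const.sub continuous_id)).add continuous_mul_log).add
      (continuous_id.mul continuous_const)
  have hlim : Tendsto (fun α : ℝ => (1 - α) * log (1 - α) + α * log α + α * log (1 / r)) (𝓝 1)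
      (𝓝 (log (1 / r))) := by
    simpa using hcont.tendsto 1
  refine (hlim.mono_left nhdsWithin_le_nhds).congr' ?_
  filter_upwards [self_mem_nhdsWithin] with α ⟨hα₀, hα₁⟩
  have ht : 0 < 1 - α := sub_pos.2 hα₁
  have hc : 0 < α ^ (α / (1 - α)) := rpow_pos_of_pos hα₀ _
  rw [zolotarevAtZero, log_div (mul_pos ht hc).ne' (rpow_pos_of_pos hr _).ne',
    log_mul ht.ne' hc.ne', log_rpow hα₀, log_rpow hr, one_div, log_inv]
  field_simp
  ring

lemma tendsto_one_sub_mul_log_pi_div_sqrt :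
    Tendsto (fun α => (1 - α) * log (π / √(1 - α))) (𝓝[Ioo 0 1] 1) (𝓝 0) := by
  have hcont : Continuous fun α : ℝ => (1 - α) * log π - (1 - α) * log (1 - α) / 2 :=
    ((continuous_const.sub continuous_id).mul continuous_const).sub
      ((continuous_mul_log.comp (continuous_const.sub continuous_id)).div_const 2)
  have hlim : Tendsto (fun α : ℝ => (1 - α) * log π - (1 - α) * log (1 - α) / 2) (𝓝 1)
      (𝓝 0) := by
    simpa using hcont.tendsto 1
  refine (hlim.mono_left nhdsWithin_le_nhds).congr' ?_
  filter_upwards [self_mem_nhdsWithin] with α hα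
  have ht : 0 < 1 - α := sub_pos.2 hα.2
  rw [log_div pi_ne_zero (sqrt_pos.2 ht).ne', log_sqrt ht.le]
  ring

/-- Let `δ ∈ (0,1)` and let `p α = P(ρ₁ ≤ 1−δ)` for the stable subordinator of index `α`,
given by the Pollard/Kanter representation
`p α = (1/π) ∫_0^π exp(−A_α(u)/(1−δ)^(α/(1−α))) du` with `A_α` Zolotarev's function.
Then `(1−α)·log log (1/p α) → log(1/(1−δ))` as `α → 1⁻`. -/
theorem stmt_10 (δ : ℝ) (hδ : δ ∈ Ioo (0 : ℝ) 1)
    (A : ℝ → ℝ → ℝ)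
    (hA : ∀ α u, A α u =
      ((Real.sin (α * u)) ^ α * (Real.sin ((1 - α) * u)) ^ (1 - α) / Real.sin u)
        ^ (1 / (1 - α)))
    (p : ℝ → ℝ)
    (hp : ∀ α ∈ Ioo (0 : ℝ) 1,
      p α = (1 / π) * ∫ u in (0:ℝ)..π,
        Real.exp (-A α u / (1 - δ) ^ (α / (1 - α)))) :
    Tendsto (fun α : ℝ => (1 - α) * Real.log (Real.log (1 / p α)))
      (𝓝[Ioo (0 : ℝ) 1] 1) (𝓝 (Real.log (1 / (1 - δ)))) := by
  obtain rfl : A = zolotarev := funext fun α => funext (hA α)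
  have hr : 0 < 1 - δ := sub_pos.2 hδ.2
  have hmem : ∀ᶠ α in 𝓝[Ioo (0 : ℝ) 1] 1, α ∈ Ioo (0 : ℝ) 1 := self_mem_nhdsWithin
  refine tendsto_mul_log_of_le_of_le_add (log_pos (one_lt_one_div hr (by linarith [hδ.1])))
    ?_ ?_ tendsto_one_sub_mul_log_pi_div_sqrt ?_ (tendsto_one_sub_mul_log_zolotarevAtZero_div hr)
    ?_ ?_
  · have h : Tendsto (fun α : ℝ => 1 - α) (𝓝 1) (𝓝 (1 - 1)) := tendsto_const_nhds.sub tendsto_id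
    exact (sub_self (1 : ℝ) ▸ h).mono_left nhdsWithin_le_nhds
  · filter_upwards [hmem] with α hα using sub_pos.2 hα.2
  · filter_upwards [hmem] with α hα
    refine log_nonneg ((one_le_div (sqrt_pos.2 (sub_pos.2 hα.2))).2 ?_)
    exact (sqrt_le_one.2 (by linarith [hα.1])).trans (by linarith [pi_gt_three])
  · filter_upwards [hmem] with α hα using div_pos (zolotarevAtZero_pos hα) (rpow_pos_of_pos hr _)
  · filter_upwards [hmem] with α hα
    have hx : 0 < (1 - δ) ^ (α / (1 - α)) := rpow_pos_of_pos hr _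
    rw [hp α hα]
    exact log_one_div_mem_Icc (exp_neg_le_integral_exp_neg_zolotarev_div hα hx)
      (integral_exp_neg_zolotarev_div_le hα hx)
end

section
/- Let δ > 0 and let ρ_1 be the stable subordinator of index α ∈ (0,1) at time 1, whose density is φ_α(t) = (1/π) ∫_0^∞ e^{−tu} e^{−u^α cos(πα)} sin(u^α sin(πα)) du. Then lim_{α→1⁻} log P(ρ_1 > 1+δ) / log(1/(1−α)) = −1. -/
/-!
Write `x = u^α sin πα`. The prefactor `sin πα / π` is asymptotic to `1 - α`, so it suffices that
the integral stays between two positive constants as `α → 1⁻`. It is bounded above by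
`e ∫ u^{α-1} e^{-δu} du = e δ^{-α} Γ(α)`, since `|sin x / x| ≤ 1` and the exponent
`-u - u^α cos πα` is at most `1`. Below, on `(0, 1]` every factor of the integrand is bounded away
from `0` once `α ≥ 1/2`, while on `(1, ∞)` the integrand can only be negative where `x > π`,
which forces `u > 1/(1-α)`; there `e^{-δu}` makes the negative part `O(e^{-δ/(2(1-α))})`.
-/

open Real Set Filter Topology MeasureTheory Asymptotics

theorem Asymptotics.IsTheta.isBigO_log_sub_log {ι : Type*} {l : Filter ι} {f g : ι → ℝ}
    (h : f =Θ[l] g) : (fun x => log (f x) - log (g x)) =O[l] fun _ => (1 : ℝ) := by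
  obtain ⟨C, hC, hfg⟩ := h.isBigO.exists_pos
  obtain ⟨c, hc, hgf⟩ := h.isBigO_symm.exists_pos
  refine IsBigO.of_bound (max |log C| |log c|) ?_
  filter_upwards [hfg.bound, hgf.bound] with x hfx hgx
  rw [Real.norm_eq_abs, Real.norm_eq_abs] at hfx hgx
  rcases eq_or_ne (f x) 0 with hf0 | hf0
  · have hg0 : g x = 0 := by simpa [hf0] using hgx
    simp [hf0, hg0]
  have hg0 : g x ≠ 0 := by rintro hg0; simp [hg0, hf0] at hfx
  have hupper : log |f x| ≤ log C + log |g x| := by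
    rw [← log_mul hC.ne' (abs_ne_zero.2 hg0)]
    exact log_le_log (abs_pos.2 hf0) hfx
  have hlower : log |g x| ≤ log c + log |f x| := by
    rw [← log_mul hc.ne' (abs_ne_zero.2 hf0)]
    exact log_le_log (abs_pos.2 hg0) hgx
  rw [← log_abs (f x), ← log_abs (g x), norm_one, mul_one, Real.norm_eq_abs, abs_le]
  constructor <;> linarith [le_abs_self (log C), le_abs_self (log c),
    le_max_left |log C| |log c|, le_max_right |log C| |log c|]

theorem tendsto_log_div_log_inv_of_isTheta {ι : Type*} {l : Filter ι} {f g : ι → ℝ}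
    (hg : Tendsto g l (𝓝[>] 0)) (h : f =Θ[l] g) :
    Tendsto (fun x => log (f x) / log (1 / g x)) l (𝓝 (-1)) := by
  have hL : Tendsto (fun x => log (1 / g x)) l atTop := by
    simpa only [one_div, Function.comp_def] using
      tendsto_log_atTop.comp (tendsto_inv_nhdsGT_zero.comp hg)
  have hsmall : Tendsto (fun x => (log (f x) - log (g x)) * (log (1 / g x))⁻¹) l (𝓝 0) := by
    refine (h.isBigO_log_sub_log.mul (isBigO_refl _ l)).trans_tendsto ?_
    simpa only [one_mul, Function.comp_def] using tendsto_inv_atTop_zero.comp hL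
  have hlim : Tendsto (fun x => -1 + (log (f x) - log (g x)) * (log (1 / g x))⁻¹) l (𝓝 (-1)) := by
    simpa using hsmall.const_add (-1)
  refine hlim.congr' ?_
  filter_upwards [hL.eventually_ne_atTop 0] with x hx
  rw [one_div, log_inv, neg_ne_zero] at hx
  rw [one_div, log_inv]
  field_simp
  ring

theorem tendsto_one_sub_nhdsLT_one : Tendsto (fun α : ℝ => 1 - α) (𝓝[<] 1) (𝓝[>] 0) := by
  refine tendsto_nhdsWithin_of_tendsto_nhds_of_eventually_within _ ?_ ?_
  · simpa using ((continuous_sub_left (1 : ℝ)).tendsto 1).mono_left nhdsWithin_le_nhds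
  · filter_upwards [self_mem_nhdsWithin] with α (hα : α < 1)
    exact sub_pos.2 hα

theorem isEquivalent_sin_pi_mul_div_pi :
    (fun α => sin (π * α) / π) ~[𝓝 1] fun α => 1 - α := by
  have h0 : Tendsto (fun α : ℝ => π * (1 - α)) (𝓝 1) (𝓝 0) := by
    simpa using (((continuous_sub_left (1 : ℝ)).const_mul π).tendsto 1)
  have := (isEquivalent_sin.comp_tendsto h0).div (IsEquivalent.refl (u := fun _ => π))
  convert this using 1
  · ext α
    simp [show π * (1 - α) = π - π * α by ring, sin_pi_sub]
  · ext α
    simp [pi_ne_zero]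

theorem sin_pi_mul_le {α : ℝ} (hα : α ≤ 1) : sin (π * α) ≤ π * (1 - α) := by
  rw [← sin_pi_sub, show π - π * α = π * (1 - α) by ring]
  exact sin_le (mul_nonneg pi_pos.le (sub_nonneg.2 hα))

theorem abs_sin_div_self_le_one (x : ℝ) : |sin x / x| ≤ 1 := by
  rcases eq_or_ne x 0 with rfl | hx
  · simp
  rw [abs_div, div_le_one (abs_pos.2 hx)]
  exact abs_sin_le_abs

theorem five_sixths_le_sin_div_self {x : ℝ} (hx0 : 0 < x) (hx1 : x ≤ 1) : 5 / 6 ≤ sin x / x := by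
  have hcube : x ^ 3 ≤ x := by simpa using pow_le_pow_of_le_one hx0.le hx1 (by norm_num : 1 ≤ 3)
  rw [le_div_iff₀ hx0]
  linarith [sin_gt_sub_cube hx0]

theorem rpow_le_one_add {u α : ℝ} (hu : 0 ≤ u) (hα0 : 0 ≤ α) (hα1 : α ≤ 1) : u ^ α ≤ 1 + u := by
  rcases le_total u 1 with h | h
  · linarith [rpow_le_one hu h hα0]
  · linarith [rpow_le_self_of_one_le h hα1]

theorem neg_sub_rpow_mul_cos_le_one {u α : ℝ} (hu : 0 ≤ u) (hα0 : 0 ≤ α) (hα1 : α ≤ 1) (θ : ℝ) :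
    -u - u ^ α * cos θ ≤ 1 := by
  nlinarith [rpow_le_one_add hu hα0 hα1, rpow_nonneg hu α, neg_one_le_cos θ]

noncomputable def stableTailIntegrand (δ α u : ℝ) : ℝ :=
  u ^ (-(1 - α)) * exp (-δ * u) *
    (exp (-u - u ^ α * cos (π * α)) * sin (u ^ α * sin (π * α)) / (u ^ α * sin (π * α)))

noncomputable def stableTailIntegral (δ α : ℝ) : ℝ :=
  ∫ u in Ioi 0, stableTailIntegrand δ α u

theorem stableTailIntegrand_eq (δ α u : ℝ) :
    stableTailIntegrand δ α u = u ^ (α - 1) * exp (-(δ * u)) * exp (-u - u ^ α * cos (π * α)) *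
      (sin (u ^ α * sin (π * α)) / (u ^ α * sin (π * α))) := by
  rw [stableTailIntegrand, neg_sub, neg_mul]
  ring

theorem abs_stableTailIntegrand_le {δ α u : ℝ} (hα : α ∈ Icc 0 1) (hu : 0 < u) :
    |stableTailIntegrand δ α u| ≤ exp 1 * (u ^ (α - 1) * exp (-(δ * u))) := by
  rw [stableTailIntegrand_eq, abs_mul, abs_mul, abs_mul, abs_of_pos (rpow_pos_of_pos hu _),
    abs_exp, abs_exp]
  calc u ^ (α - 1) * exp (-(δ * u)) * exp (-u - u ^ α * cos (π * α)) *
        |sin (u ^ α * sin (π * α)) / (u ^ α * sin (π * α))|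
      ≤ u ^ (α - 1) * exp (-(δ * u)) * exp 1 * 1 := by
        gcongr
        · exact neg_sub_rpow_mul_cos_le_one hu.le hα.1 hα.2 _
        · exact abs_sin_div_self_le_one _
    _ = exp 1 * (u ^ (α - 1) * exp (-(δ * u))) := by ring

theorem le_stableTailIntegrand_of_le_one {δ α u : ℝ} (hδ : 0 ≤ δ) (hα : α ∈ Ico (1 / 2) 1)
    (hu : u ∈ Ioc 0 1) : 5 / 6 * exp (-(1 + δ)) ≤ stableTailIntegrand δ α u := by
  obtain ⟨hu0, hu1⟩ := hu
  have hsin : 0 < sin (π * α) :=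
    sin_pos_of_pos_of_lt_pi (by nlinarith [pi_pos, hα.1]) (by nlinarith [pi_pos, hα.2])
  have hcos : cos (π * α) ≤ 0 :=
    cos_nonpos_of_pi_div_two_le_of_le (by nlinarith [pi_pos, hα.1]) (by nlinarith [pi_pos, hα.2])
  have hx0 : 0 < u ^ α * sin (π * α) := mul_pos (rpow_pos_of_pos hu0 α) hsin
  have hx1 : u ^ α * sin (π * α) ≤ 1 :=
    mul_le_one₀ (rpow_le_one hu0.le hu1 (by linarith [hα.1])) hsin.le (sin_le_one _)
  rw [stableTailIntegrand_eq]
  calc 5 / 6 * exp (-(1 + δ)) = 1 * exp (-(δ * 1)) * exp (-1) * (5 / 6) := by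
        rw [mul_one, one_mul, ← exp_add]; ring_nf
    _ ≤ _ := by
        gcongr ?_ * ?_ * ?_ * ?_
        · exact one_le_rpow_of_pos_of_le_one_of_nonpos hu0 hu1 (by linarith [hα.2])
        · exact exp_le_exp.2 (by nlinarith)
        · exact exp_le_exp.2 (by nlinarith [rpow_nonneg hu0.le α])
        · exact five_sixths_le_sin_div_self hx0 hx1

theorem inv_one_sub_le_of_pi_lt_rpow_mul_sin_pi_mul {α u : ℝ} (hα : α ∈ Ioo 0 1) (hu : 1 ≤ u)
    (hπx : π < u ^ α * sin (π * α)) : (1 - α)⁻¹ ≤ u := by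
  have hx : u ^ α * sin (π * α) ≤ u * (π * (1 - α)) :=
    mul_le_mul (rpow_le_self_of_one_le hu hα.2.le) (sin_pi_mul_le hα.2.le)
      (sin_nonneg_of_nonneg_of_le_pi (by nlinarith [pi_pos, hα.1]) (by nlinarith [pi_pos, hα.2]))
      (by linarith)
  rw [inv_le_iff_one_le_mul₀ (sub_pos.2 hα.2)]
  nlinarith [pi_pos]

theorem neg_le_stableTailIntegrand_of_one_lt {δ α u : ℝ} (hδ : 0 ≤ δ) (hα : α ∈ Ioo 0 1)
    (hu : 1 < u) :
    -(exp 1 / π * exp (-(δ / 2 * (1 - α)⁻¹)) * exp (-(δ / 2) * u)) ≤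
      stableTailIntegrand δ α u := by
  have hu0 : 0 < u := one_pos.trans hu
  have hsin : 0 < sin (π * α) :=
    sin_pos_of_pos_of_lt_pi (mul_pos pi_pos hα.1) (by nlinarith [pi_pos, hα.2])
  have hx0 : 0 < u ^ α * sin (π * α) := mul_pos (rpow_pos_of_pos hu0 α) hsin
  rw [stableTailIntegrand_eq]
  rcases le_or_gt (u ^ α * sin (π * α)) π with hxπ | hπx
  · have hsinc : 0 ≤ sin (u ^ α * sin (π * α)) / (u ^ α * sin (π * α)) :=
      div_nonneg (sin_nonneg_of_nonneg_of_le_pi hx0.le hxπ) hx0.le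
    have := mul_nonneg (by positivity : 0 ≤ u ^ (α - 1) * exp (-(δ * u)) *
      exp (-u - u ^ α * cos (π * α))) hsinc
    have : 0 ≤ exp 1 / π * exp (-(δ / 2 * (1 - α)⁻¹)) * exp (-(δ / 2) * u) := by positivity
    linarith
  have hexp : exp (-(δ * u)) ≤ exp (-(δ / 2 * (1 - α)⁻¹)) * exp (-(δ / 2) * u) := by
    rw [← exp_add]
    exact exp_le_exp.2
      (by nlinarith [inv_one_sub_le_of_pi_lt_rpow_mul_sin_pi_mul hα hu.le hπx])
  have hsinc : |sin (u ^ α * sin (π * α)) / (u ^ α * sin (π * α))| ≤ 1 / π := by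
    rw [abs_div, abs_of_pos hx0]
    exact div_le_div₀ zero_le_one (abs_sin_le_one _) pi_pos hπx.le
  refine (neg_le_neg ?_).trans (neg_abs_le _)
  rw [abs_mul, abs_mul, abs_mul, abs_of_pos (rpow_pos_of_pos hu0 _), abs_exp, abs_exp]
  calc u ^ (α - 1) * exp (-(δ * u)) * exp (-u - u ^ α * cos (π * α)) *
        |sin (u ^ α * sin (π * α)) / (u ^ α * sin (π * α))|
      ≤ 1 * (exp (-(δ / 2 * (1 - α)⁻¹)) * exp (-(δ / 2) * u)) * exp 1 * (1 / π) := by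
        gcongr
        · exact rpow_le_one_of_one_le_of_nonpos hu.le (by linarith [hα.2])
        · exact neg_sub_rpow_mul_cos_le_one hu0.le hα.1.le hα.2.le _
    _ = exp 1 / π * exp (-(δ / 2 * (1 - α)⁻¹)) * exp (-(δ / 2) * u) := by ring

theorem integrableOn_rpow_sub_one_mul_exp_neg_mul {α δ : ℝ} (hα : 0 < α) (hδ : 0 < δ) :
    IntegrableOn (fun u : ℝ => u ^ (α - 1) * exp (-(δ * u))) (Ioi 0) := by
  simpa only [rpow_one, neg_mul] using
    integrableOn_rpow_mul_exp_neg_mul_rpow (s := α - 1) (by linarith) one_pos hδ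

theorem integrableOn_stableTailIntegrand {δ α : ℝ} (hδ : 0 < δ) (hα : α ∈ Ioc 0 1) :
    IntegrableOn (stableTailIntegrand δ α) (Ioi 0) := by
  refine ((integrableOn_rpow_sub_one_mul_exp_neg_mul hα.1 hδ).const_mul (exp 1)).mono' ?_ ?_
  · exact (by unfold stableTailIntegrand; fun_prop : Measurable _).aestronglyMeasurable
  · filter_upwards [ae_restrict_mem measurableSet_Ioi] with u hu
    exact abs_stableTailIntegrand_le ⟨hα.1.le, hα.2⟩ hu

theorem abs_stableTailIntegral_le {δ α : ℝ} (hδ : 0 < δ) (hα : α ∈ Ioc 0 1) :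
    |stableTailIntegral δ α| ≤ exp 1 * ((1 / δ) ^ α * Gamma α) := by
  calc |stableTailIntegral δ α|
        ≤ ∫ u in Ioi (0 : ℝ), exp 1 * (u ^ (α - 1) * exp (-(δ * u))) := by
        rw [stableTailIntegral, ← norm_eq_abs]
        refine norm_integral_le_of_norm_le
          ((integrableOn_rpow_sub_one_mul_exp_neg_mul hα.1 hδ).const_mul _) ?_
        filter_upwards [ae_restrict_mem measurableSet_Ioi] with u hu
        exact abs_stableTailIntegrand_le ⟨hα.1.le, hα.2⟩ hu
    _ = exp 1 * ((1 / δ) ^ α * Gamma α) := by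
        rw [integral_const_mul, integral_rpow_mul_exp_neg_mul_Ioi hα.1 hδ]

theorem le_setIntegral_Ioc_stableTailIntegrand {δ α : ℝ} (hδ : 0 < δ) (hα : α ∈ Ico (1 / 2) 1) :
    5 / 6 * exp (-(1 + δ)) ≤ ∫ u in Ioc 0 1, stableTailIntegrand δ α u := by
  have hint : IntegrableOn (stableTailIntegrand δ α) (Ioc 0 1) :=
    (integrableOn_stableTailIntegrand hδ ⟨by linarith [hα.1], hα.2.le⟩).mono_set
      Ioc_subset_Ioi_self
  simpa using setIntegral_ge_of_const_le measurableSet_Ioc (by simp)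
    (fun u hu => le_stableTailIntegrand_of_le_one hδ.le hα hu) hint

theorem neg_le_setIntegral_Ioi_one_stableTailIntegrand {δ α : ℝ} (hδ : 0 < δ)
    (hα : α ∈ Ioo 0 1) :
    -(2 / δ * (exp 1 / π * exp (-(δ / 2 * (1 - α)⁻¹)))) ≤
      ∫ u in Ioi 1, stableTailIntegrand δ α u := by
  set c := exp 1 / π * exp (-(δ / 2 * (1 - α)⁻¹))
  have hmono : ∫ u in Ioi 1, -(c * exp (-(δ / 2) * u)) ≤
      ∫ u in Ioi 1, stableTailIntegrand δ α u :=
    setIntegral_mono_on ((exp_neg_integrableOn_Ioi 1 (half_pos hδ)).const_mul c).neg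
      ((integrableOn_stableTailIntegrand hδ ⟨hα.1, hα.2.le⟩).mono_set
        (Ioi_subset_Ioi zero_le_one))
      measurableSet_Ioi fun u hu => neg_le_stableTailIntegrand_of_one_lt hδ.le hα hu
  have hval : ∫ u in Ioi 1, -(c * exp (-(δ / 2) * u)) = -(2 / δ * (c * exp (-(δ / 2)))) := by
    rw [integral_neg, integral_const_mul, integral_exp_mul_Ioi (by linarith) 1]
    field_simp
  have hc : 0 ≤ c := by positivity
  have hexp : exp (-(δ / 2)) ≤ 1 := exp_le_one_iff.2 (by linarith)
  rw [hval] at hmono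
  refine le_trans ?_ hmono
  rw [neg_le_neg_iff]
  calc 2 / δ * (c * exp (-(δ / 2))) ≤ 2 / δ * (c * 1) := by gcongr
    _ = 2 / δ * c := by rw [mul_one]

theorem stableTailIntegral_isBigO_one {δ : ℝ} (hδ : 0 < δ) :
    stableTailIntegral δ =O[𝓝[<] 1] fun _ => (1 : ℝ) := by
  have hΓ : ContinuousAt Gamma 1 :=
    (differentiableAt_Gamma fun m => by linarith [m.cast_nonneg (α := ℝ)]).continuousAt
  have hmaj : ContinuousAt (fun α => exp 1 * ((1 / δ) ^ α * Gamma α)) 1 :=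
    continuousAt_const.mul ((continuousAt_const_rpow (by positivity)).mul hΓ)
  refine IsBigO.trans ?_ ((hmaj.tendsto.mono_left nhdsWithin_le_nhds).isBigO_one ℝ)
  refine IsBigO.of_bound 1 ?_
  filter_upwards [Ioo_mem_nhdsLT zero_lt_one] with α hα
  rw [one_mul, norm_eq_abs, norm_eq_abs]
  exact (abs_stableTailIntegral_le hδ ⟨hα.1, hα.2.le⟩).trans (le_abs_self _)

theorem eventually_le_stableTailIntegral {δ : ℝ} (hδ : 0 < δ) :
    ∀ᶠ α in 𝓝[<] 1, 5 / 12 * exp (-(1 + δ)) ≤ stableTailIntegral δ α := by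
  have htail : Tendsto (fun α => 2 / δ * (exp 1 / π * exp (-(δ / 2 * (1 - α)⁻¹))))
      (𝓝[<] 1) (𝓝 0) := by
    have h := tendsto_exp_neg_atTop_nhds_zero.comp
      ((tendsto_inv_nhdsGT_zero.comp tendsto_one_sub_nhdsLT_one).const_mul_atTop (half_pos hδ))
    simpa only [mul_zero, Function.comp_def] using (h.const_mul (exp 1 / π)).const_mul (2 / δ)
  filter_upwards [Ioo_mem_nhdsLT (by norm_num : (1 / 2 : ℝ) < 1),
    htail.eventually (eventually_le_nhds (by positivity : 0 < 5 / 12 * exp (-(1 + δ))))]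
    with α hα hsmall
  have hint := integrableOn_stableTailIntegrand hδ ⟨by linarith [hα.1], hα.2.le⟩
  have hsplit : stableTailIntegral δ α = (∫ u in Ioc 0 1, stableTailIntegrand δ α u) +
      ∫ u in Ioi 1, stableTailIntegrand δ α u := by
    rw [stableTailIntegral, ← setIntegral_union (Ioc_disjoint_Ioi le_rfl) measurableSet_Ioi
      (hint.mono_set Ioc_subset_Ioi_self) (hint.mono_set (Ioi_subset_Ioi zero_le_one)),
      Ioc_union_Ioi_eq_Ioi zero_le_one]
  linarith [le_setIntegral_Ioc_stableTailIntegrand hδ ⟨hα.1.le, hα.2⟩,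
    neg_le_setIntegral_Ioi_one_stableTailIntegrand hδ ⟨by linarith [hα.1], hα.2⟩]

theorem stableTailIntegral_isTheta_one {δ : ℝ} (hδ : 0 < δ) :
    stableTailIntegral δ =Θ[𝓝[<] 1] fun _ => (1 : ℝ) := by
  refine ⟨stableTailIntegral_isBigO_one hδ, (isBigO_const_left_iff_pos_le_norm one_ne_zero).2
    ⟨5 / 12 * exp (-(1 + δ)), by positivity,
      (eventually_le_stableTailIntegral hδ).mono fun α h => h.trans (le_abs_self _)⟩⟩

/-- Let `δ > 0` and let `q α = P(ρ₁ > 1+δ)` for the stable subordinator of index `α`,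
given by the integral representation derived from the density `φ_α`:
`q α = (sin πα/π) ∫_0^∞ u^{−(1−α)} e^{−δu} [e^{−u−u^α cos πα} sin(u^α sin πα)/(u^α sin πα)] du`.
Then `log q α / log(1/(1−α)) → −1` as `α → 1⁻`. -/
theorem stmt_11 (δ : ℝ) (hδ : 0 < δ)
    (q : ℝ → ℝ)
    (hq : ∀ α ∈ Ioo (0 : ℝ) 1,
      q α = (Real.sin (π * α) / π) *
        ∫ u in Ioi (0 : ℝ),
          u ^ (-(1 - α)) * Real.exp (-δ * u) *
            (Real.exp (-u - u ^ α * Real.cos (π * α)) *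
              Real.sin (u ^ α * Real.sin (π * α)) / (u ^ α * Real.sin (π * α)))) :
    Tendsto (fun α : ℝ => Real.log (q α) / Real.log (1 / (1 - α)))
      (𝓝[Ioo (0 : ℝ) 1] 1) (𝓝 (-1)) := by
  have hl : 𝓝[Ioo (0 : ℝ) 1] 1 ≤ 𝓝[<] 1 := nhdsWithin_mono _ Ioo_subset_Iio_self
  have hq' : q =ᶠ[𝓝[Ioo (0 : ℝ) 1] 1] fun α => sin (π * α) / π * stableTailIntegral δ α :=
    eventually_nhdsWithin_of_forall hq
  have hΘ : (fun α => sin (π * α) / π * stableTailIntegral δ α) =Θ[𝓝[<] 1]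
      fun α => (1 - α) * 1 :=
    (isEquivalent_sin_pi_mul_div_pi.isTheta.mono nhdsWithin_le_nhds).mul
      (stableTailIntegral_isTheta_one hδ)
  refine tendsto_log_div_log_inv_of_isTheta (tendsto_one_sub_nhdsLT_one.mono_left hl) ?_
  simpa only [mul_one] using hq'.isTheta.trans (hΘ.mono hl)
end

section
/- Define A_{λ,α} = α ∫_0^1 (1 − e^{λ(1−α)z}) z^{−(1+α)} dz for λ ∈ ℝ and α ∈ (0,1), interpreted for λ > 0 via the identity A_{λ,α} = (1−λ)e^{λ(1−α)} − 1 + λ^2(1−α)∫_0^1 z^{1−α} e^{λ(1−α)z} dz. Then for every λ ∈ (0,1] and α ∈ (0,1), A_{λ,α} + 1 > 0. -/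
open Real intervalIntegral

/-- With `A_{λ,α} = (1−λ)e^{λ(1−α)} − 1 + λ²(1−α)∫₀¹ z^{1−α} e^{λ(1−α)z} dz` (the
integration-by-parts form of `α∫₀¹(1−e^{λ(1−α)z})z^{−(1+α)}dz`), for every `λ ∈ (0,1]`
and `α ∈ (0,1)` one has `A_{λ,α} + 1 > 0`. -/
theorem stmt_17 (lam α : ℝ) (hlam : lam ∈ Set.Ioc (0 : ℝ) 1) (hα : α ∈ Set.Ioo (0 : ℝ) 1)
    (A : ℝ)
    (hA : A = (1 - lam) * Real.exp (lam * (1 - α)) - 1 +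
      lam ^ 2 * (1 - α) *
        ∫ z in (0:ℝ)..1, z ^ (1 - α) * Real.exp (lam * (1 - α) * z)) :
    A + 1 > 0 := by
  obtain ⟨hl0, hl1⟩ := hlam
  obtain ⟨ha0, ha1⟩ := hα
  have hint : IntervalIntegrable (fun z : ℝ => z ^ (1 - α) * Real.exp (lam * (1 - α) * z))
      MeasureTheory.volume 0 1 := by
    apply ContinuousOn.intervalIntegrable
    apply ContinuousOn.mul
    · exact fun x _ =>
        (Real.continuousAt_rpow_const x _ (Or.inr (by linarith))).continuousWithinAt
    · exact (Real.continuous_exp.comp (continuous_const.mul continuous_id)).continuousOn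
  have hpos : 0 < ∫ z in (0:ℝ)..1, z ^ (1 - α) * Real.exp (lam * (1 - α) * z) :=
    intervalIntegral.intervalIntegral_pos_of_pos_on hint
      (fun x hx => mul_pos (Real.rpow_pos_of_pos hx.1 _) (Real.exp_pos _)) one_pos
  have h1 : 0 ≤ (1 - lam) * Real.exp (lam * (1 - α)) :=
    mul_nonneg (by linarith) (Real.exp_pos _).le
  have h2 : 0 < lam ^ 2 * (1 - α) *
      ∫ z in (0:ℝ)..1, z ^ (1 - α) * Real.exp (lam * (1 - α) * z) :=
    mul_pos (mul_pos (pow_pos hl0 2) (by linarith)) hpos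
  linarith [hA.ge, hA.le]
end
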